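/- arXiv:1312.2163 — 10 statements merged into one kernel-verified Lean document; each statement's English description precedes it below -/
import Mathlib

section
/- For positive integers n and r with r dividing n, each equivalence class of S_n under ≡_r has exactly (r!)^{n/r} elements. -/
/-! `σ ≡_r π` says that `σ⁻¹ * π` preserves the block map `a ↦ ⌊a / r⌋`. So `σ ↦ σ⁻¹ * π`
identifies the class of `π` with the stabiliser of that map, which is the product of the
symmetric groups of its `n / r` fibres, each of size `r`. -/

open Equiv Finset

/-- The `r`-regular multipermutation associated with a permutation `π` of `Fin n`:
`mp n r π j` is the (0-indexed) rank block of element `j`, i.e. `⌊π⁻¹(j)/r⌋`. -/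
def mp (n r : ℕ) (π : Equiv.Perm (Fin n)) (j : Fin n) : ℕ := (π.symm j : ℕ) / r

/-- The `i`-th part of the ordered set partition associated with `π`:
the set of elements of rank block `i`. -/
def part (n r : ℕ) (π : Equiv.Perm (Fin n)) (i : ℕ) : Finset (Fin n) :=
  Finset.univ.filter fun j => mp n r π j = i

/-- The `r`-regular Hamming distance between permutations. -/
def hammR (n r : ℕ) (π σ : Equiv.Perm (Fin n)) : ℕ :=
  (Finset.univ.filter fun j => mp n r π j ≠ mp n r σ j).card

theorem Equiv.Perm.card_comp_symm_eq_comp_symm {α β : Type*} (f : α → β) (π : Perm α) :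
    Nat.card {σ : Perm α // f ∘ σ.symm = f ∘ π.symm} = Nat.card {g : Perm α // f ∘ g = f} := by
  refine Nat.card_congr (subtypeEquiv ((Equiv.inv _).trans (Equiv.mulRight π)) fun σ => ?_)
  constructor
  · intro h
    ext a
    simpa using congrFun h (π a)
  · intro h
    ext a
    simpa using congrFun h (π.symm a)

theorem Fin.image_val_div {n r : ℕ} (hr : 0 < r) (hdvd : r ∣ n) :
    univ.image (fun a : Fin n => (a : ℕ) / r) = range (n / r) := by
  ext i
  simp only [mem_image, mem_univ, true_and, mem_range]
  constructor
  · rintro ⟨a, rfl⟩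
    rw [Nat.div_lt_iff_lt_mul hr, Nat.div_mul_cancel hdvd]
    exact a.isLt
  · intro hi
    refine ⟨⟨i * r, ?_⟩, Nat.mul_div_cancel i hr⟩
    rw [Nat.lt_div_iff_mul_lt' hdvd, mul_comm] at hi
    exact hi

theorem Fin.card_val_div_eq {n r i : ℕ} (hi : i < n / r) :
    Fintype.card {a : Fin n // (a : ℕ) / r = i} = r := by
  have hr : 0 < r := Nat.pos_of_ne_zero (by rintro rfl; simp at hi)
  have hin : i * r + r ≤ n := by
    have := Nat.mul_le_of_le_div r (i + 1) n hi
    linarith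
  refine (Fintype.card_congr ?_).trans (Fintype.card_fin r)
  exact
    { toFun a := ⟨a.1 % r, Nat.mod_lt _ hr⟩
      invFun c := ⟨⟨i * r + c, by omega⟩, show (i * r + c) / r = i by
        rw [Nat.add_comm, Nat.add_mul_div_right _ _ hr, Nat.div_eq_of_lt c.isLt, zero_add]⟩
      left_inv := by
        rintro ⟨a, rfl⟩
        ext
        exact Nat.div_add_mod' a r
      right_inv c := by
        ext
        simp [Nat.mod_eq_of_lt c.isLt] }

theorem card_equivR_class_general (n r : ℕ) (hr : 0 < r) (hdvd : r ∣ n)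
    (π : Equiv.Perm (Fin n)) :
    Nat.card {σ : Equiv.Perm (Fin n) // mp n r σ = mp n r π} =
      (Nat.factorial r) ^ (n / r) := by
  set q : Fin n → ℕ := fun a => (a : ℕ) / r
  calc Nat.card {σ : Perm (Fin n) // mp n r σ = mp n r π}
      = Fintype.card {g : Perm (Fin n) // q ∘ g = q} := by
        rw [← Nat.card_eq_fintype_card]
        exact Perm.card_comp_symm_eq_comp_symm q π
    _ = ∏ i ∈ range (n / r), (Fintype.card {a // q a = i}).factorial := by
        rw [DomMulAct.stabilizer_card', Fin.image_val_div hr hdvd]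
    _ = r.factorial ^ (n / r) := by
        rw [prod_congr rfl fun i hi => by rw [Fin.card_val_div_eq (mem_range.mp hi)],
          prod_const, card_range]

/-- Each equivalence class of `S_n` under `≡_r` has exactly `(r!)^{n/r}` elements. -/
theorem card_equivR_class (n r : ℕ) (hn : 0 < n) (hr : 0 < r) (hdvd : r ∣ n)
    (π : Equiv.Perm (Fin n)) :
    Nat.card {σ : Equiv.Perm (Fin n) // mp n r σ = mp n r π} =
      (Nat.factorial r) ^ (n / r) :=
  card_equivR_class_general n r hr hdvd π
end

section
/- For any translocation φ, any permutation π ∈ S_n, and any rank i ∈ [n/r], the intersection |o^r_π(i) ∩ o^r_{πφ}(i)| ≥ r − 1; that is, a single translocation changes at most one element of each rank. -/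
/-- `B` is obtained from `A` by moving a single element to another position. -/
def MovedOne {α : Type*} (A B : List α) : Prop :=
  ∃ (l₁ l₂ l₁' l₂' : List α) (x : α),
    A = l₁ ++ x :: l₂ ∧ B = l₁' ++ x :: l₂' ∧ l₁ ++ l₂ = l₁' ++ l₂'

/-- `φ` is a translocation: it is obtained from the identity permutation by moving one
element to another position (shifting the elements in between by one). -/
def IsTranslocation (n : ℕ) (φ : Equiv.Perm (Fin n)) : Prop :=
  MovedOne (List.ofFn (fun i : Fin n => i)) (List.ofFn φ)

/-!
A translocation moving the entry at position `b` keeps the relative order of all other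
entries, so every position other than `b` is shifted by at most one step, towards `b`. Hence,
out of an interval of positions, only `b` can leave it if `b` lies inside, and otherwise only
the endpoint nearer to `b` can. The elements of rank `i` under `π` and under `π * φ` are the
images under `π` of an interval `I` of `r` positions and of its image `φ '' I`, so they share
all but at most one.
-/

open Finset

theorem MovedOne.exists_eraseIdx_eq {α : Type*} {A B : List α} (h : MovedOne A B) :
    ∃ a b, A.eraseIdx a = B.eraseIdx b := by
  obtain ⟨l₁, l₂, l₁', l₂', x, rfl, rfl, h⟩ := h
  exact ⟨l₁.length, l₁'.length, by simpa [List.eraseIdx_append_of_length_le]⟩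

def ShiftsTowards {n : ℕ} (b : ℕ) (f : Fin n → Fin n) : Prop :=
  ∀ m : Fin n, ((m : ℕ) < b → (m : ℕ) ≤ f m ∧ (f m : ℕ) ≤ m + 1) ∧
    (b < (m : ℕ) → (m : ℕ) ≤ f m + 1 ∧ (f m : ℕ) ≤ m)

theorem IsTranslocation.exists_shiftsTowards {n : ℕ} {φ : Equiv.Perm (Fin n)}
    (hφ : IsTranslocation n φ) : ∃ b, ShiftsTowards b φ := by
  obtain ⟨a, b, h⟩ := MovedOne.exists_eraseIdx_eq hφ
  refine ⟨b, fun m => ⟨fun hmb => ?_, fun hbm => ?_⟩⟩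
  · have hm := congrArg (·[(m : ℕ)]?) h
    simp only [List.getElem?_eraseIdx, List.getElem?_ofFn, if_pos hmb] at hm
    split_ifs at hm <;> simp only [Fin.eta, Option.some.injEq, Fin.ext_iff] at hm <;> omega
  · have hm := congrArg (·[(m : ℕ) - 1]?) h
    simp only [List.getElem?_eraseIdx, List.getElem?_ofFn,
      if_neg (show ¬(m : ℕ) - 1 < b by omega), Nat.sub_add_cancel (show 1 ≤ (m : ℕ) by omega)] at hm
    split_ifs at hm <;> simp only [Fin.eta, Option.some.injEq, Fin.ext_iff] at hm <;> omega

def finIco (n lo hi : ℕ) : Finset (Fin n) :=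
  {m | (m : ℕ) ∈ Ico lo hi}

@[simp]
theorem mem_finIco {n lo hi : ℕ} {m : Fin n} :
    m ∈ finIco n lo hi ↔ lo ≤ m ∧ (m : ℕ) < hi := by
  simp [finIco]

theorem card_finIco {n lo hi : ℕ} (h : hi ≤ n) : #(finIco n lo hi) = hi - lo := by
  have hlt : ∀ m ∈ Ico lo hi, m < n := fun m hm => by simp at hm; omega
  rw [← Nat.card_Ico, ← card_attachFin _ hlt]
  congr 1
  ext m
  simp

theorem ShiftsTowards.card_filter_notMem_finIco_le_one {n b : ℕ} {f : Fin n → Fin n}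
    (hf : ShiftsTowards b f) (lo hi : ℕ) :
    #{m ∈ finIco n lo hi | f m ∉ finIco n lo hi} ≤ 1 := by
  refine card_le_one.2 fun m₁ h₁ m₂ h₂ => Fin.ext ?_
  simp only [mem_filter, mem_finIco] at h₁ h₂
  have := hf m₁
  have := hf m₂
  omega

theorem Finset.card_map_inter_self {α : Type*} [DecidableEq α] (s : Finset α) (f : α ↪ α) :
    #(s.map f ∩ s) = #{x ∈ s | f x ∈ s} := by
  rw [← filter_mem_eq_inter, filter_map, card_map]
  rfl

theorem part_eq_map_finIco {n r : ℕ} (hr : 0 < r) (σ : Equiv.Perm (Fin n)) (i : ℕ) :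
    part n r σ i = (finIco n (i * r) (i * r + r)).map σ.toEmbedding := by
  ext j
  simp only [part, mp, mem_filter, mem_univ, true_and, mem_map_equiv, mem_finIco,
    Nat.div_eq_iff hr]
  omega

theorem translocation_changes_at_most_one_per_rank_general (n r : ℕ) (hr : 0 < r)
    (φ π : Equiv.Perm (Fin n)) (hφ : IsTranslocation n φ)
    (i : ℕ) (hi : i < n / r) :
    r - 1 ≤ ((part n r π i) ∩ (part n r (π * φ) i)).card := by
  obtain ⟨b, hb⟩ := hφ.exists_shiftsTowards
  set I := finIco n (i * r) (i * r + r)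
  have hI : #I = r := by
    have := (Nat.le_div_iff_mul_le hr).1 hi
    rw [card_finIco (by rwa [Nat.add_one_mul] at this)]
    omega
  have hinter :
      part n r π i ∩ part n r (π * φ) i = (I.map φ.toEmbedding ∩ I).map π.toEmbedding := by
    rw [part_eq_map_finIco hr, part_eq_map_finIco hr, map_inter, inter_comm, map_map]
    rfl
  have hescape : #{m ∈ I | φ m ∉ I} ≤ 1 := hb.card_filter_notMem_finIco_le_one _ _
  have hsplit := card_filter_add_card_filter_not (s := I) (p := fun m => φ m ∈ I)
  rw [hinter, card_map, card_map_inter_self]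
  simp only [Equiv.coe_toEmbedding]
  omega

/-- A single translocation changes at most one element of each rank:
`|o^r_π(i) ∩ o^r_{πφ}(i)| ≥ r − 1` for every rank `i ∈ [n/r]`. -/
theorem translocation_changes_at_most_one_per_rank (n r : ℕ) (hn : 0 < n) (hr : 0 < r)
    (hdvd : r ∣ n) (φ π : Equiv.Perm (Fin n)) (hφ : IsTranslocation n φ)
    (i : ℕ) (hi : i < n / r) :
    r - 1 ≤ ((part n r π i) ∩ (part n r (π * φ) i)).card :=
  translocation_changes_at_most_one_per_rank_general n r hr φ π hφ i hi
end

section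
/- For π, σ ∈ S_n and r dividing n, the r-regular Ulam distance and r-regular Hamming distance satisfy (r/n)·d_H^r(π,σ) ≤ d_∘^r(π,σ) ≤ d_H^r(π,σ). -/
/-- Length of a longest common subsequence of two lists. -/
noncomputable def lcsLen {α : Type*} (A B : List α) : ℕ :=
  sSup {k | ∃ l : List α, l.length = k ∧ l.Sublist A ∧ l.Sublist B}

/-- Ulam distance between two lists of the same length (length minus LCS length). -/
noncomputable def ulamList {α : Type*} (A B : List α) : ℕ := A.length - lcsLen A B

/-- The Ulam distance between two permutations of `Fin n`. -/
noncomputable def ulam (n : ℕ) (π σ : Equiv.Perm (Fin n)) : ℕ :=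
  n - lcsLen (List.ofFn π) (List.ofFn σ)

/-- The `r`-regular Ulam distance: minimum Ulam distance between members of the
`≡_r`-equivalence classes of `π` and `σ`. -/
noncomputable def ulamR (n r : ℕ) (π σ : Equiv.Perm (Fin n)) : ℕ :=
  sInf {k | ∃ π' σ' : Equiv.Perm (Fin n),
    mp n r π' = mp n r π ∧ mp n r σ' = mp n r σ ∧ k = ulam n π' σ'}
open Finset

section LongestCommonSubsequence

variable {α : Type*}

theorem List.exists_orderEmbedding_of_sublist_ofFn {n : ℕ} {l : List α} {v : Fin n → α}
    (h : l.Sublist (List.ofFn v)) : ∃ f : Fin l.length ↪o Fin n, ∀ i, l.get i = v (f i) := by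
  obtain ⟨f, hf⟩ := List.sublist_iff_exists_fin_orderEmbedding_get_eq.mp h
  exact ⟨f.trans (Fin.castOrderIso List.length_ofFn).toOrderEmbedding, fun i => by
    rw [hf, List.get_ofFn]; rfl⟩

theorem bddAbove_commonSublist_length (A B : List α) :
    BddAbove {k | ∃ l : List α, l.length = k ∧ l.Sublist A ∧ l.Sublist B} := by
  refine ⟨A.length, ?_⟩
  rintro _ ⟨l, rfl, hA, -⟩
  exact hA.length_le

theorem length_le_lcsLen {l A B : List α} (hA : l.Sublist A) (hB : l.Sublist B) :
    l.length ≤ lcsLen A B :=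
  le_csSup (bddAbove_commonSublist_length A B) ⟨l, rfl, hA, hB⟩

theorem exists_commonSublist_length_eq_lcsLen (A B : List α) :
    ∃ l : List α, l.length = lcsLen A B ∧ l.Sublist A ∧ l.Sublist B :=
  Nat.sSup_mem (s := {k | ∃ l : List α, l.length = k ∧ l.Sublist A ∧ l.Sublist B})
    ⟨0, [], rfl, List.nil_sublist A, List.nil_sublist B⟩ (bddAbove_commonSublist_length A B)

theorem List.filter_eq_filter_of_pairwise {β : Type*} [PartialOrder β] {l₁ l₂ : List α}
    {κ₁ κ₂ : α → β} (hκ : Function.Injective κ₁) (hl : l₁.Perm l₂)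
    (h₁ : l₁.Pairwise (κ₁ · ≤ κ₁ ·)) (h₂ : l₂.Pairwise (κ₂ · ≤ κ₂ ·)) (p : α → Bool)
    (hp : ∀ a, p a → κ₁ a = κ₂ a) : l₁.filter p = l₂.filter p := by
  have h₂' : (l₂.filter p).Pairwise (κ₁ · ≤ κ₁ ·) := (h₂.filter p).imp_of_mem
    fun ha hb hab => by rwa [hp _ (List.mem_filter.mp ha).2, hp _ (List.mem_filter.mp hb).2]
  exact (hl.filter p).eq_of_pairwise (fun _ _ _ _ h h' => hκ (le_antisymm h h')) (h₁.filter p) h₂'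

end LongestCommonSubsequence

section OrderEmbedding

variable {k n : ℕ}

theorem Fin.val_le_val_orderEmbedding (f : Fin k ↪o Fin n) (t : Fin k) : (t : ℕ) ≤ f t := by
  have := card_le_card_of_injOn f (s := Iic t) (t := Iic (f t))
    (fun x hx => by simpa using f.monotone (mem_Iic.mp hx)) f.injective.injOn
  simpa using this

theorem Fin.val_orderEmbedding_add_le (f : Fin k ↪o Fin n) (t : Fin k) :
    (f t : ℕ) + k ≤ n + t := by
  have := card_le_card_of_injOn f (s := Ici t) (t := Ici (f t))
    (fun x hx => by simpa using f.monotone (mem_Ici.mp hx)) f.injective.injOn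
  simp only [Fin.card_Ici] at this
  omega

theorem max_le_min_add_of_orderEmbedding (f g : Fin k ↪o Fin n) (t : Fin k) :
    max (f t : ℕ) (g t) ≤ min (f t : ℕ) (g t) + (n - k) := by
  have := Fin.val_le_val_orderEmbedding f t
  have := Fin.val_le_val_orderEmbedding g t
  have := Fin.val_orderEmbedding_add_le f t
  have := Fin.val_orderEmbedding_add_le g t
  omega

theorem card_straddle_le (f g : Fin k ↪o Fin n) (c : ℕ) :
    #{t | min (f t : ℕ) (g t) < c ∧ c ≤ max (f t : ℕ) (g t)} ≤ n - k := by
  have hmin : StrictMono fun t => min (f t : ℕ) (g t) := fun a b hab =>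
    min_lt_min (f.strictMono hab) (g.strictMono hab)
  calc #{t | min (f t : ℕ) (g t) < c ∧ c ≤ max (f t : ℕ) (g t)}
      ≤ #(Ico (c - (n - k)) c) := by
        refine card_le_card_of_injOn _ (fun t ht => ?_) hmin.injective.injOn
        have := max_le_min_add_of_orderEmbedding f g t
        simp only [coe_filter, mem_univ, true_and, Set.mem_ofPred_eq] at ht
        simp only [coe_Ico, Set.mem_Ico]
        omega
    _ ≤ n - k := by simp only [Nat.card_Ico]; omega

theorem card_div_ne_div_le (r : ℕ) (hdvd : r ∣ n) (f g : Fin k ↪o Fin n) :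
    #{t | (f t : ℕ) / r ≠ g t / r} ≤ (n / r - 1) * (n - k) := by
  set cut := fun t => max (f t : ℕ) (g t) / r
  have hcross : ∀ t, (f t : ℕ) / r ≠ g t / r →
      min (f t : ℕ) (g t) < cut t * r ∧ cut t * r ≤ max (f t : ℕ) (g t) := by
    intro t ht
    have hr : 0 < r := Nat.pos_of_ne_zero fun h => ht (by simp [h])
    have hne : min (f t : ℕ) (g t) / r ≠ cut t := by
      rcases le_total (f t : ℕ) (g t) with h | h <;> simp [cut, h, ht, Ne.symm ht]
    have : min (f t : ℕ) (g t) / r < cut t :=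
      lt_of_le_of_ne (Nat.div_le_div_right min_le_max) hne
    exact ⟨(Nat.div_lt_iff_lt_mul hr).mp this, Nat.div_mul_le_self _ _⟩
  calc #{t | (f t : ℕ) / r ≠ g t / r}
      ≤ (n - k) * #(image cut {t | (f t : ℕ) / r ≠ g t / r}) := by
        refine card_le_mul_card_image _ _ fun i _ => le_trans (card_le_card fun t ht => ?_)
          (card_straddle_le f g (i * r))
        simp only [mem_filter, mem_univ, true_and] at ht ⊢
        exact ht.2 ▸ hcross t ht.1
    _ ≤ (n - k) * #(Ico 1 (n / r)) := by
        refine Nat.mul_le_mul_left _ (card_le_card fun i hi => ?_)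
        obtain ⟨t, ht, rfl⟩ := mem_image.mp hi
        have hmin := (hcross t (mem_filter.mp ht).2).1
        refine mem_Ico.mpr ⟨Nat.pos_of_ne_zero fun h => ?_,
          Nat.div_lt_div_of_lt_of_dvd hdvd (max_lt (f t).2 (g t).2)⟩
        simp [h] at hmin
    _ = (n / r - 1) * (n - k) := by simp [mul_comm]

end OrderEmbedding

section Hamming

variable {n r : ℕ}

theorem hammR_congr {π π' σ σ' : Equiv.Perm (Fin n)} (hπ : mp n r π' = mp n r π)
    (hσ : mp n r σ' = mp n r σ) : hammR n r π' σ' = hammR n r π σ := by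
  simp only [hammR, hπ, hσ]

theorem hammR_le_of_commonSubseq {k : ℕ} (π σ : Equiv.Perm (Fin n)) (f g : Fin k ↪o Fin n)
    (hfg : ∀ t, π (f t) = σ (g t)) :
    hammR n r π σ ≤ (n - k) + #{t | (f t : ℕ) / r ≠ g t / r} := by
  set e : Fin k → Fin n := fun t => π (f t)
  have he : Function.Injective e := π.injective.comp f.injective
  have hmp : ∀ t, mp n r π (e t) = (f t : ℕ) / r ∧ mp n r σ (e t) = (g t : ℕ) / r := fun t =>
    ⟨by simp [mp, e], by simp [mp, e, hfg]⟩
  have hsub : ({j | mp n r π j ≠ mp n r σ j} : Finset (Fin n)) ⊆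
      (univ.image e)ᶜ ∪ ({t | (f t : ℕ) / r ≠ g t / r} : Finset (Fin k)).image e := by
    intro j hj
    by_cases hje : j ∈ univ.image e
    · obtain ⟨t, -, rfl⟩ := mem_image.mp hje
      simp only [mem_filter, mem_univ, true_and, (hmp t).1, (hmp t).2] at hj
      exact mem_union_right _ (mem_image_of_mem e (by simpa using hj))
    · exact mem_union_left _ (mem_compl.mpr hje)
  calc hammR n r π σ ≤ #((univ.image e)ᶜ) + #(image e {t | (f t : ℕ) / r ≠ g t / r}) :=
        (card_le_card hsub).trans (card_union_le _ _)
    _ ≤ (n - k) + #{t | (f t : ℕ) / r ≠ g t / r} := by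
        rw [card_compl, card_image_of_injective _ he, card_image_of_injective _ he]
        simp

theorem r_mul_hammR_le_mul_ulam (hdvd : r ∣ n) (π σ : Equiv.Perm (Fin n)) :
    r * hammR n r π σ ≤ n * ulam n π σ := by
  obtain ⟨l, hl, hπ, hσ⟩ := exists_commonSublist_length_eq_lcsLen (List.ofFn π) (List.ofFn σ)
  obtain ⟨f, hf⟩ := List.exists_orderEmbedding_of_sublist_ofFn hπ
  obtain ⟨g, hg⟩ := List.exists_orderEmbedding_of_sublist_ofFn hσ
  have hham := hammR_le_of_commonSubseq (r := r) π σ f g fun t => (hf t).symm.trans (hg t)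
  have hbad := card_div_ne_div_le r hdvd f g
  have hn : n = r * (n / r) := (Nat.mul_div_cancel' hdvd).symm
  rw [ulam, ← hl]
  have hblocks : (n - l.length) + (n / r - 1) * (n - l.length) ≤ n / r * (n - l.length) := by
    rcases Nat.eq_zero_or_pos (n / r) with hm | hm
    · have : n = 0 := by rw [hn, hm, mul_zero]
      simp [this]
    · conv_rhs => rw [← Nat.sub_one_add_one hm.ne', add_one_mul]
      omega
  calc r * hammR n r π σ ≤ r * (n / r * (n - l.length)) := by gcongr; omega
    _ = n * (n - l.length) := by rw [← mul_assoc, ← hn]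

end Hamming

section Ulam

variable {n : ℕ}

/-- The representative of the `≡_r`-class of `π` whose blocks of `r` consecutive positions are
each listed in increasing order. -/
def sortBlocks (r : ℕ) (π : Equiv.Perm (Fin n)) : Equiv.Perm (Fin n) :=
  π * Tuple.sort fun p => toLex ((p : ℕ) / r, π p)

theorem Tuple.comp_sort_toLex_of_monotone {α β : Type*} [LinearOrder α] [LinearOrder β]
    {b : Fin n → α} (hb : Monotone b) (c : Fin n → β) :
    b ∘ Tuple.sort (fun p => toLex (b p, c p)) = b :=
  Tuple.unique_monotone (τ := 1) (fun i j h => by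
    have := Tuple.monotone_sort (fun p => toLex (b p, c p)) h
    exact Prod.Lex.monotone_fst _ _ this) hb

theorem mp_sortBlocks (r : ℕ) (π : Equiv.Perm (Fin n)) : mp n r (sortBlocks r π) = mp n r π := by
  set ρ := Tuple.sort fun p : Fin n => toLex ((p : ℕ) / r, π p)
  have hρ : ∀ p, (ρ p : ℕ) / r = p / r := congrFun
    (Tuple.comp_sort_toLex_of_monotone (fun _ _ h => Nat.div_le_div_right h) π)
  funext j
  simpa [mp, sortBlocks, Equiv.Perm.mul_def] using (hρ (ρ.symm (π.symm j))).symm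

theorem pairwise_ofFn_sortBlocks (r : ℕ) (π : Equiv.Perm (Fin n)) :
    (List.ofFn (sortBlocks r π)).Pairwise
      (fun a b => toLex (mp n r π a, a) ≤ toLex (mp n r π b, b)) := by
  rw [List.pairwise_ofFn]
  intro i j hij
  simpa [sortBlocks, mp] using Tuple.monotone_sort (fun p => toLex ((p : ℕ) / r, π p)) hij.le

theorem Equiv.Perm.length_filter_ofFn (π : Equiv.Perm (Fin n)) (p : Fin n → Bool) :
    ((List.ofFn π).filter p).length = #{j | p j} := by
  rw [← List.toFinset_card_of_nodup ((List.nodup_ofFn.mpr π.injective).filter p)]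
  congr 1
  ext j
  simp [List.mem_ofFn, π.surjective j]

theorem ulam_sortBlocks_le_hammR (r : ℕ) (π σ : Equiv.Perm (Fin n)) :
    ulam n (sortBlocks r π) (sortBlocks r σ) ≤ hammR n r π σ := by
  set p : Fin n → Bool := fun j => mp n r π j = mp n r σ j
  have hperm : (List.ofFn (sortBlocks r π)).Perm (List.ofFn (sortBlocks r σ)) :=
    ((sortBlocks r π).ofFn_comp_perm id).trans ((sortBlocks r σ).ofFn_comp_perm id).symm
  have hcommon := List.filter_eq_filter_of_pairwise
    (fun a b h => congrArg Prod.snd (toLex.injective h)) hperm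
    (pairwise_ofFn_sortBlocks r π) (pairwise_ofFn_sortBlocks r σ) p
    (fun a ha => by simpa [p] using ha)
  have hsubσ : ((List.ofFn (sortBlocks r π)).filter p).Sublist (List.ofFn (sortBlocks r σ)) :=
    hcommon ▸ List.filter_sublist
  have hlcs := length_le_lcsLen List.filter_sublist hsubσ
  rw [Equiv.Perm.length_filter_ofFn] at hlcs
  have hsplit := card_filter_add_card_filter_not (s := univ) fun j => mp n r π j = mp n r σ j
  simp only [card_univ, Fintype.card_fin] at hsplit
  simp only [ulam, hammR, p, decide_eq_true_eq, ne_eq] at hlcs ⊢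
  omega

theorem ulamR_le_ulam {r : ℕ} {π σ π' σ' : Equiv.Perm (Fin n)} (hπ : mp n r π' = mp n r π)
    (hσ : mp n r σ' = mp n r σ) : ulamR n r π σ ≤ ulam n π' σ' :=
  Nat.sInf_le ⟨π', σ', hπ, hσ, rfl⟩

theorem exists_ulamR_eq_ulam (r : ℕ) (π σ : Equiv.Perm (Fin n)) :
    ∃ π' σ' : Equiv.Perm (Fin n),
      mp n r π' = mp n r π ∧ mp n r σ' = mp n r σ ∧ ulamR n r π σ = ulam n π' σ' :=
  Nat.sInf_mem (s := {k | ∃ π' σ' : Equiv.Perm (Fin n),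
    mp n r π' = mp n r π ∧ mp n r σ' = mp n r σ ∧ k = ulam n π' σ'}) ⟨_, π, σ, rfl, rfl, rfl⟩

theorem ulamR_le_hammR (r : ℕ) (π σ : Equiv.Perm (Fin n)) : ulamR n r π σ ≤ hammR n r π σ :=
  (ulamR_le_ulam (mp_sortBlocks r π) (mp_sortBlocks r σ)).trans (ulam_sortBlocks_le_hammR r π σ)

theorem r_mul_hammR_le_mul_ulamR {r : ℕ} (hdvd : r ∣ n) (π σ : Equiv.Perm (Fin n)) :
    r * hammR n r π σ ≤ n * ulamR n r π σ := by
  obtain ⟨π', σ', hπ, hσ, h⟩ := exists_ulamR_eq_ulam r π σ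
  rw [h, ← hammR_congr hπ hσ]
  exact r_mul_hammR_le_mul_ulam hdvd π' σ'

end Ulam

theorem ulamR_le_hammR_and_ge_general (n r : ℕ) (hdvd : r ∣ n)
    (π σ : Equiv.Perm (Fin n)) :
    r * hammR n r π σ ≤ n * ulamR n r π σ ∧ ulamR n r π σ ≤ hammR n r π σ :=
  ⟨r_mul_hammR_le_mul_ulamR hdvd π σ, ulamR_le_hammR r π σ⟩

/-- Relationship between the `r`-regular Ulam and Hamming distances:
`(r/n)·d_H^r(π,σ) ≤ d_∘^r(π,σ) ≤ d_H^r(π,σ)` (first inequality stated in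
cross-multiplied form). -/
theorem ulamR_le_hammR_and_ge (n r : ℕ) (hn : 0 < n) (hr : 0 < r) (hdvd : r ∣ n)
    (π σ : Equiv.Perm (Fin n)) :
    r * hammR n r π σ ≤ n * ulamR n r π σ ∧ ulamR n r π σ ≤ hammR n r π σ :=
  ulamR_le_hammR_and_ge_general n r hdvd π σ
end

section
/- For disjoint sets P ⊆ [n] and Q = [n] \ P, and permutations π, σ ∈ S_n, the Ulam distance satisfies d_∘(π,σ) ≥ d_∘(π_P, σ_P) + d_∘(π_Q, σ_Q), where π_P denotes the subsequence of π consisting of its elements in P. -/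
/-- The projection of a permutation `π` of `Fin n` onto a set `P`: the subsequence of
`π` (as the sequence `π(1),…,π(n)`) consisting of its elements belonging to `P`. -/
def projL (n : ℕ) (π : Equiv.Perm (Fin n)) (P : Finset (Fin n)) : List (Fin n) :=
  (List.ofFn π).filter (fun x => x ∈ P)

/-!
A longest common subsequence of `π` and `σ` splits into its elements in `P` and those in `Q`;
these are common subsequences of `π_P, σ_P` and of `π_Q, σ_Q` respectively, so
`lcs(π, σ) ≤ lcs(π_P, σ_P) + lcs(π_Q, σ_Q)`, while `n = |π_P| + |π_Q|`.
-/

namespace List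

variable {α : Type*}

lemma lcsLen_set_nonempty (A B : List α) :
    {k | ∃ l : List α, l.length = k ∧ l.Sublist A ∧ l.Sublist B}.Nonempty :=
  ⟨0, [], rfl, nil_sublist _, nil_sublist _⟩

lemma lcsLen_set_bddAbove (A B : List α) :
    BddAbove {k | ∃ l : List α, l.length = k ∧ l.Sublist A ∧ l.Sublist B} :=
  ⟨A.length, fun _ ⟨_, hl, hA, _⟩ => hl ▸ hA.length_le⟩

lemma lcsLen_le_length_left (A B : List α) : lcsLen A B ≤ A.length :=
  csSup_le (lcsLen_set_nonempty A B) fun _ ⟨_, hl, hA, _⟩ => hl ▸ hA.length_le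

lemma Sublist.length_le_lcsLen {A B l : List α} (hA : l.Sublist A) (hB : l.Sublist B) :
    l.length ≤ lcsLen A B :=
  le_csSup (lcsLen_set_bddAbove A B) ⟨l, rfl, hA, hB⟩

lemma exists_sublist_length_eq_lcsLen (A B : List α) :
    ∃ l : List α, l.length = lcsLen A B ∧ l.Sublist A ∧ l.Sublist B :=
  Nat.sSup_mem (lcsLen_set_nonempty A B) (lcsLen_set_bddAbove A B)

lemma lcsLen_le_lcsLen_filter_add_lcsLen_filter_not (A B : List α) (p : α → Bool) :
    lcsLen A B ≤ lcsLen (A.filter p) (B.filter p) +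
      lcsLen (A.filter (!p ·)) (B.filter (!p ·)) := by
  obtain ⟨l, hl, hA, hB⟩ := exists_sublist_length_eq_lcsLen A B
  calc lcsLen A B = (l.filter p).length + (l.filter (!p ·)).length :=
        hl ▸ l.length_eq_length_filter_add p
    _ ≤ _ := Nat.add_le_add ((hA.filter _).length_le_lcsLen (hB.filter _))
        ((hA.filter _).length_le_lcsLen (hB.filter _))

lemma ulamList_filter_add_ulamList_filter_not_le (A B : List α) (p : α → Bool) :
    ulamList (A.filter p) (B.filter p) + ulamList (A.filter (!p ·)) (B.filter (!p ·)) ≤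
      ulamList A B := by
  have hlen := A.length_eq_length_filter_add p
  have hlcs := lcsLen_le_lcsLen_filter_add_lcsLen_filter_not A B p
  have hp := lcsLen_le_length_left (A.filter p) (B.filter p)
  have hnp := lcsLen_le_length_left (A.filter (!p ·)) (B.filter (!p ·))
  simp only [ulamList]
  omega

end List

lemma ulam_eq_ulamList (n : ℕ) (π σ : Equiv.Perm (Fin n)) :
    ulam n π σ = ulamList (List.ofFn π) (List.ofFn σ) := by
  rw [ulam, ulamList, List.length_ofFn]

lemma projL_compl (n : ℕ) (π : Equiv.Perm (Fin n)) (P : Finset (Fin n)) :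
    projL n π Pᶜ = (List.ofFn π).filter (fun x => !decide (x ∈ P)) := by
  simp only [projL, Finset.mem_compl, decide_not]

/-- The Ulam distance of two permutations is at least the sum of the Ulam distances of
their projections onto `P` and onto `Q = [n] \ P`. -/
theorem ulam_ge_sum_of_projections (n : ℕ) (P : Finset (Fin n))
    (π σ : Equiv.Perm (Fin n)) :
    ulamList (projL n π P) (projL n σ P) + ulamList (projL n π Pᶜ) (projL n σ Pᶜ) ≤
      ulam n π σ := by
  rw [ulam_eq_ulamList, projL_compl, projL_compl]
  exact List.ulamList_filter_add_ulamList_filter_not_le _ _ (fun x => decide (x ∈ P))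
end

section
/- Singleton bound for constant composition codes: for positive integers n, r, d with r | n, the maximum size A_H(n,r,d) of an r-regular multipermutation code of length n with minimum Hamming distance d satisfies A_H(n,r,d) ≤ (n/r)^{n-d+1}. -/
/-!
Restricting a codeword to its first `n - d + 1` coordinates is injective on a code of minimum
distance `d`, since two codewords agreeing there differ in at most `d - 1` places. The
restrictions are words of length `n - d + 1` over the alphabet `{0, …, n/r - 1}`.
-/

/-- `f : Fin n → ℕ` is an `r`-regular multipermutation over the alphabet `[n/r]`. -/
def IsRegularM (n r : ℕ) (f : Fin n → ℕ) : Prop :=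
  (∀ j, f j < n / r) ∧ ∀ i < n / r, (Finset.univ.filter fun j => f j = i).card = r

/-- Hamming distance between two functions on `Fin n`. -/
def hammF (n : ℕ) (f g : Fin n → ℕ) : ℕ :=
  (Finset.univ.filter fun j => f j ≠ g j).card

/-- `AH n r d` : the maximum size of an `r`-regular multipermutation code of length `n`
with minimum Hamming distance `d`. -/
noncomputable def AH (n r d : ℕ) : ℕ :=
  sSup {M | ∃ C : Finset (Fin n → ℕ), C.card = M ∧ (∀ f ∈ C, IsRegularM n r f) ∧
    ∀ f ∈ C, ∀ g ∈ C, f ≠ g → d ≤ hammF n f g}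

open Finset

theorem hammF_eq_hammingDist (n : ℕ) (f g : Fin n → ℕ) : hammF n f g = hammingDist f g := rfl

section Singleton

variable {α : Type*} [DecidableEq α] {n k : ℕ}

theorem hammingDist_le_sub_of_eqOn_castLE (hk : k ≤ n) {x y : Fin n → α}
    (h : ∀ i : Fin k, x (Fin.castLE hk i) = y (Fin.castLE hk i)) :
    hammingDist x y ≤ n - k := by
  unfold hammingDist
  have hdisj : Disjoint (univ.filter fun i => x i ≠ y i) (univ.map (Fin.castLEEmb hk)) := by
    simp only [disjoint_left, mem_filter, mem_univ, true_and, mem_map, Fin.castLEEmb_apply,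
      not_exists]
    rintro _ hne i rfl
    exact hne (h i)
  have hunion := card_le_univ ((univ.filter fun i => x i ≠ y i) ∪ univ.map (Fin.castLEEmb hk))
  rw [card_union_of_disjoint hdisj, card_map, card_univ, Fintype.card_fin,
    Fintype.card_fin] at hunion
  exact Nat.le_sub_of_add_le hunion

/-- Singleton bound, with `k` playing the role of `n - d + 1`. -/
theorem card_le_card_pow_of_sub_lt_hammingDist (hk : k ≤ n) {S : Finset α}
    {C : Finset (Fin n → α)} (hS : ∀ x ∈ C, ∀ i, x i ∈ S)
    (hC : ∀ x ∈ C, ∀ y ∈ C, x ≠ y → n - k < hammingDist x y) :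
    C.card ≤ S.card ^ k := by
  rw [← Fintype.card_piFinset_const]
  refine card_le_card_of_injOn (fun x => x ∘ Fin.castLE hk) ?_ ?_
  · intro x hx
    simpa [Fintype.mem_piFinset] using fun i => hS x hx _
  · intro x hx y hy hxy
    by_contra hne
    exact (hC x hx y hy hne).not_ge (hammingDist_le_sub_of_eqOn_castLE hk (congrFun hxy))

end Singleton

theorem AH_singleton_bound_general (n r d : ℕ) (hn : 0 < n) (hd : 0 < d) :
    AH n r d ≤ (n / r) ^ (n - d + 1) := by
  refine csSup_le' ?_
  rintro _ ⟨C, rfl, hreg, hdist⟩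
  have hS : ∀ f ∈ C, ∀ j, f j ∈ range (n / r) := fun f hf j => mem_range.mpr ((hreg f hf).1 j)
  simpa using card_le_card_pow_of_sub_lt_hammingDist (by omega) hS fun f hf g hg hfg => by
    have hfar := hdist f hf g hg hfg
    rw [hammF_eq_hammingDist] at hfar
    omega

/-- Singleton bound for constant composition codes:
`A_H(n,r,d) ≤ (n/r)^{n-d+1}`. -/
theorem AH_singleton_bound (n r d : ℕ) (hn : 0 < n) (hr : 0 < r) (hd : 0 < d)
    (hdvd : r ∣ n) :
    AH n r d ≤ (n / r) ^ (n - d + 1) :=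
  AH_singleton_bound_general n r d hn hd
end

section
/- Refined Singleton bound: A_H(n,r,d) ≤ S(n-d+1, n/r, r), where S(l,m,r) is the number of sequences of length l over alphabet [m] in which no symbol appears more than r times. -/
/-- `S l m r` : the number of sequences of length `l` over the alphabet `[m]` in which
no symbol appears more than `r` times. -/
noncomputable def Scount (l m r : ℕ) : ℕ :=
  (Finset.univ.filter fun f : Fin l → Fin m =>
    ∀ v : Fin m, (Finset.univ.filter fun j => f j = v).card ≤ r).card

open Finset

theorem Finset.card_filter_comp_embedding_le {α β : Type*} [Fintype α] [Fintype β] (e : β ↪ α)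
    (p : α → Prop) [DecidablePred p] :
    #{b | p (e b)} ≤ #{a | p a} :=
  calc #{b | p (e b)} = #((univ.filter (p ∘ e)).map e) := (card_map e).symm
    _ = #((univ.map e).filter p) := by rw [filter_map]
    _ ≤ #{a | p a} := card_le_card (filter_subset_filter p (subset_univ _))

theorem hammF_le_of_comp_castLE_eq {n l : ℕ} (h : l ≤ n) {f g : Fin n → ℕ}
    (hfg : f ∘ Fin.castLE h = g ∘ Fin.castLE h) :
    hammF n f g ≤ n - l := by
  have hsub : ({j | f j ≠ g j} : Finset (Fin n)) ⊆ (univ.map (Fin.castLEEmb h))ᶜ := by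
    intro j hj
    simp only [mem_filter, mem_univ, true_and] at hj
    simp only [mem_compl, mem_map, mem_univ, true_and, not_exists]
    rintro i rfl
    exact hj (congrFun hfg i)
  calc hammF n f g ≤ #(univ.map (Fin.castLEEmb h))ᶜ := card_le_card hsub
    _ = n - l := by simp [card_compl]

theorem injOn_comp_castLE_of_le_hammF {n l d : ℕ} (h : l ≤ n) (hld : n < l + d)
    {C : Finset (Fin n → ℕ)} (hC : ∀ f ∈ C, ∀ g ∈ C, f ≠ g → d ≤ hammF n f g) :
    Set.InjOn (fun f => f ∘ Fin.castLE h) (C : Set (Fin n → ℕ)) := by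
  intro f hf g hg hfg
  by_contra hne
  have := hC f hf g hg hne
  have := hammF_le_of_comp_castLE_eq h hfg
  omega

theorem IsRegularM.comp_castLE_mem_image {n r l : ℕ} {f : Fin n → ℕ} (hf : IsRegularM n r f)
    (h : l ≤ n) :
    f ∘ Fin.castLE h ∈ (univ.filter fun g : Fin l → Fin (n / r) =>
      ∀ v, #{j | g j = v} ≤ r).image fun g j => (g j : ℕ) := by
  refine mem_image.2 ⟨fun j => ⟨f (Fin.castLE h j), hf.1 _⟩, mem_filter.2 ⟨mem_univ _, ?_⟩, rfl⟩
  intro v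
  calc #{j | (⟨f (Fin.castLE h j), hf.1 _⟩ : Fin (n / r)) = v}
      = #{j : Fin l | f (Fin.castLEEmb h j) = v} := by simp [Fin.ext_iff]
    _ ≤ #{j | f j = v} := card_filter_comp_embedding_le (Fin.castLEEmb h) (fun a => f a = v)
    _ = r := hf.2 v v.isLt

theorem AH_le_Scount_general (n r d : ℕ) (hn : 0 < n) (hd : 0 < d) :
    AH n r d ≤ Scount (n - d + 1) (n / r) r := by
  refine csSup_le' ?_
  rintro _ ⟨C, rfl, hreg, hdist⟩
  have hln : n - d + 1 ≤ n := by omega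
  calc #C = #(C.image fun f => f ∘ Fin.castLE hln) :=
        (card_image_of_injOn (injOn_comp_castLE_of_le_hammF hln (by omega) hdist)).symm
    _ ≤ #((univ.filter fun g : Fin (n - d + 1) → Fin (n / r) => ∀ v, #{j | g j = v} ≤ r).image
          fun g j => (g j : ℕ)) :=
        card_le_card (image_subset_iff.2 fun f hf => (hreg f hf).comp_castLE_mem_image hln)
    _ = Scount (n - d + 1) (n / r) r :=
        card_image_of_injective _ fun g g' hg => funext fun j => Fin.ext (congrFun hg j)

/-- Refined Singleton bound: `A_H(n,r,d) ≤ S(n-d+1, n/r, r)`. -/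
theorem AH_le_Scount (n r d : ℕ) (hn : 0 < n) (hr : 0 < r) (hd : 0 < d)
    (hdvd : r ∣ n) :
    AH n r d ≤ Scount (n - d + 1) (n / r) r :=
  AH_le_Scount_general n r d hn hd
end

section
/- Gilbert–Varshamov bound in the Hamming metric: A_H(n,r,d) ≥ n! / ((r!)^{n/r} · C(n,d-1) · (n/r)^{d-1}), where C(n,d-1) is the binomial coefficient. -/
/-!
Regular multipermutations are the functions `Fin n → Fin (n / r)` all of whose fibres have
size `r`, i.e. the orbit under `Perm (Fin n)` of one such function. By orbit–stabilizer there
are `n! / (r!)^(n/r)` of them, the stabilizer being a product of `n / r` symmetric groups on `r`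
letters. A code of maximum size covers all of them with Hamming balls of radius `d - 1`, since
a word outside these balls could be added to it; a ball meets at most `C(n, d-1) (n/r)^(d-1)`
words with letters below `n / r` (choose the positions to change, then the new letters).
-/

open Finset Equiv MulAction

section FiberCount

variable {α ι : Type*} [Fintype α] [DecidableEq ι]

theorem exists_perm_comp_eq_of_card_fiber_eq {f g : α → ι}
    (h : ∀ i, Fintype.card {a // f a = i} = Fintype.card {a // g a = i}) :
    ∃ σ : Perm α, g ∘ σ = f :=
  ⟨ofFiberEquiv fun i => Fintype.equivOfCardEq (h i), funext (ofFiberEquiv_map _)⟩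

theorem card_fiber_comp_perm (g : α → ι) (σ : Perm α) (i : ι) :
    Fintype.card {a // (g ∘ σ) a = i} = Fintype.card {a // g a = i} :=
  Fintype.card_congr (σ.subtypeEquiv fun _ => Iff.rfl)

theorem DomMulAct.orbit_eq_setOf_card_fiber_eq (f₀ : α → ι) :
    orbit (Perm α)ᵈᵐᵃ f₀ =
      {f | ∀ i, Fintype.card {a // f a = i} = Fintype.card {a // f₀ a = i}} := by
  ext f
  simp only [mem_orbit_iff, Set.mem_ofPred_eq]
  constructor
  · rintro ⟨σ, rfl⟩ i
    exact card_fiber_comp_perm f₀ (DomMulAct.mk.symm σ) i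
  · intro h
    obtain ⟨σ, hσ⟩ := exists_perm_comp_eq_of_card_fiber_eq h
    exact ⟨DomMulAct.mk σ, hσ⟩

variable [DecidableEq α] [Fintype ι]

theorem card_filter_card_fiber_eq_mul_prod_factorial (f₀ : α → ι) :
    #{f : α → ι | ∀ i, Fintype.card {a // f a = i} = Fintype.card {a // f₀ a = i}} *
      ∏ i, (Fintype.card {a // f₀ a = i}).factorial = (Fintype.card α).factorial := by
  have hstab : Nat.card (stabilizer (Perm α)ᵈᵐᵃ f₀) =
      ∏ i, (Fintype.card {a // f₀ a = i}).factorial := by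
    rw [← DomMulAct.stabilizer_card, ← Nat.card_eq_fintype_card]
    exact Nat.card_congr (subtypeEquiv DomMulAct.mk.symm fun _ => DomMulAct.mem_stabilizer_iff)
  rw [← hstab, ← Set.ncard_coe_finset, coe_filter_univ,
    ← DomMulAct.orbit_eq_setOf_card_fiber_eq, ← Nat.card_coe_set_eq, ← Nat.card_prod,
    Nat.card_congr (orbitProdStabilizerEquivGroup _ _),
    Nat.card_congr DomMulAct.mk.symm, Nat.card_perm, Nat.card_eq_fintype_card]

end FiberCount

theorem exists_fin_card_fiber_eq {n m r : ℕ} (h : m * r = n) :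
    ∃ f₀ : Fin n → Fin m, ∀ i, Fintype.card {a // f₀ a = i} = r := by
  subst h
  refine ⟨fun a => (finProdFinEquiv.symm a).1, fun i => ?_⟩
  calc Fintype.card {a // (finProdFinEquiv.symm a).1 = i}
      = Fintype.card {p : Fin m × Fin r // p.1 = i} :=
        Fintype.card_congr (finProdFinEquiv.symm.subtypeEquiv fun _ => Iff.rfl)
    _ = r := by
      rw [Fintype.card_congr (Equiv.prodSubtypeFstEquivSubtypeProd (p := (· = i)))]
      simp

theorem card_filter_card_fiber_eq_mul_factorial_pow {n m r : ℕ} (h : m * r = n) :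
    #{f : Fin n → Fin m | ∀ i, Fintype.card {a // f a = i} = r} * r.factorial ^ m =
      n.factorial := by
  obtain ⟨f₀, hf₀⟩ := exists_fin_card_fiber_eq h
  simpa [hf₀] using card_filter_card_fiber_eq_mul_prod_factorial f₀

def regularFinset (n r : ℕ) : Finset (Fin n → ℕ) :=
  ({f : Fin n → Fin (n / r) | ∀ i, Fintype.card {a // f a = i} = r} : Finset _).map
    Fin.valEmbedding.arrowCongrRight

theorem card_filter_val_eq {n m : ℕ} (g : Fin n → Fin m) (i : Fin m) :
    #{a | (g a : ℕ) = i} = Fintype.card {a // g a = i} := by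
  simp [Fintype.card_subtype, Fin.val_inj]

theorem mem_regularFinset {n r : ℕ} {f : Fin n → ℕ} :
    f ∈ regularFinset n r ↔ IsRegularM n r f := by
  simp only [regularFinset, mem_map, mem_filter_univ, Function.Embedding.arrowCongrRight_apply]
  constructor
  · rintro ⟨g, hg, rfl⟩
    refine ⟨fun a => (g a).isLt, fun i hi => ?_⟩
    simpa [hg] using card_filter_val_eq g ⟨i, hi⟩
  · rintro ⟨hlt, hcard⟩
    refine ⟨fun a => ⟨f a, hlt a⟩, fun i => ?_, rfl⟩
    rw [← card_filter_val_eq]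
    exact hcard i i.isLt

theorem card_regularFinset_mul_factorial_pow {n r : ℕ} (h : r ∣ n) :
    #(regularFinset n r) * r.factorial ^ (n / r) = n.factorial := by
  rw [regularFinset, card_map]
  exact card_filter_card_fiber_eq_mul_factorial_pow (Nat.div_mul_cancel h)

theorem card_filter_forall_notMem_eq_le_pow {α β : Type*} [Fintype α] [DecidableEq α]
    [DecidableEq β] (s : Finset (α → β)) (t : Finset β) (hs : ∀ f ∈ s, ∀ a, f a ∈ t)
    (S : Finset α) (g : α → β) : #{f ∈ s | ∀ a ∉ S, f a = g a} ≤ #t ^ #S := by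
  calc #{f ∈ s | ∀ a ∉ S, f a = g a} ≤ #(Fintype.piFinset fun _ : S => t) := by
        refine card_le_card_of_injOn (fun f a => f a) (fun f hf => ?_)
          fun f₁ hf₁ f₂ hf₂ h => ?_
        · simpa using fun a _ => hs f (mem_filter.1 hf).1 a
        · simp only [coe_filter, Set.mem_ofPred_eq] at hf₁ hf₂
          funext a
          by_cases ha : a ∈ S
          · exact congrFun h ⟨a, ha⟩
          · rw [hf₁.2 a ha, hf₂.2 a ha]
    _ = #t ^ #S := by simp

theorem card_filter_hammF_le_le {n q e : ℕ} (he : e ≤ n) (s : Finset (Fin n → ℕ))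
    (hs : ∀ f ∈ s, ∀ j, f j < q) (g : Fin n → ℕ) :
    #{f ∈ s | hammF n f g ≤ e} ≤ n.choose e * q ^ e := by
  have hcover : {f ∈ s | hammF n f g ≤ e} ⊆
      (univ.powersetCard e).biUnion fun S => {f ∈ s | ∀ j ∉ S, f j = g j} := by
    intro f hf
    rw [mem_filter] at hf
    obtain ⟨S, hsub, -, hS⟩ :=
      exists_subsuperset_card_eq (subset_univ {j | f j ≠ g j}) hf.2 (by simpa using he)
    refine mem_biUnion.2
      ⟨S, mem_powersetCard.2 ⟨subset_univ S, hS⟩, mem_filter.2 ⟨hf.1, fun j hj => ?_⟩⟩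
    by_contra hne
    exact hj (hsub (mem_filter.2 ⟨mem_univ j, hne⟩))
  calc #{f ∈ s | hammF n f g ≤ e} ≤ #(univ.powersetCard e) * q ^ e := by
        refine (card_le_card hcover).trans (card_biUnion_le_card_mul _ _ _ fun S hS => ?_)
        rw [← (mem_powersetCard.1 hS).2, ← card_range q]
        -- `convert` only reconciles the two `Decidable` instances of the filter predicate
        convert card_filter_forall_notMem_eq_le_pow s _ (fun f hf j => mem_range.2 (hs f hf j)) S g
    _ = n.choose e * q ^ e := by simp

/-- Split off from `AH`, so that `AH n r d = sSup {M | ∃ C, #C = M ∧ IsCode n r d C}`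
holds by `rfl`. -/
def IsCode (n r d : ℕ) (C : Finset (Fin n → ℕ)) : Prop :=
  (∀ f ∈ C, IsRegularM n r f) ∧ ∀ f ∈ C, ∀ g ∈ C, f ≠ g → d ≤ hammF n f g

theorem hammF_self (n : ℕ) (f : Fin n → ℕ) : hammF n f f = 0 := by
  simp [hammF]

theorem hammF_comm (n : ℕ) (f g : Fin n → ℕ) : hammF n f g = hammF n g f := by
  simp only [hammF, ne_comm]

section Codes

variable {n r d : ℕ} {C : Finset (Fin n → ℕ)}

theorem bddAbove_card_isCode : BddAbove {M | ∃ C, #C = M ∧ IsCode n r d C} :=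
  ⟨#(regularFinset n r), by
    rintro _ ⟨C, rfl, hreg, -⟩
    exact card_le_card fun f hf => mem_regularFinset.2 (hreg f hf)⟩

theorem IsCode.card_le_AH (hC : IsCode n r d C) : #C ≤ AH n r d :=
  le_csSup bddAbove_card_isCode ⟨C, rfl, hC⟩

theorem IsCode.insert {f : Fin n → ℕ} (hC : IsCode n r d C) (hf : IsRegularM n r f)
    (hfar : ∀ g ∈ C, d ≤ hammF n f g) : IsCode n r d (insert f C) := by
  refine ⟨forall_mem_insert _ _ _ |>.2 ⟨hf, hC.1⟩, fun g₁ hg₁ g₂ hg₂ hne => ?_⟩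
  rcases mem_insert.1 hg₁ with rfl | h₁ <;> rcases mem_insert.1 hg₂ with rfl | h₂
  · exact absurd rfl hne
  · exact hfar g₂ h₂
  · exact hammF_comm n g₁ g₂ ▸ hfar g₁ h₁
  · exact hC.2 g₁ h₁ g₂ h₂ hne

theorem IsCode.exists_hammF_le_of_card_eq_AH {f : Fin n → ℕ} (hC : IsCode n r d C)
    (hcard : #C = AH n r d) (hf : IsRegularM n r f) : ∃ g ∈ C, hammF n f g ≤ d - 1 := by
  by_contra! hfar
  have hfC : f ∉ C := fun hmem => by simpa [hammF_self] using hfar f hmem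
  have := (hC.insert hf fun g hg => Nat.le_of_pred_lt (hfar g hg)).card_le_AH
  rw [card_insert_of_notMem hfC] at this
  omega

end Codes

theorem exists_isCode_card_eq_AH (n r d : ℕ) : ∃ C, IsCode n r d C ∧ #C = AH n r d := by
  obtain ⟨C, hcard, hC⟩ :=
    Nat.sSup_mem (by exact ⟨0, ∅, rfl, by simp [IsCode]⟩) bddAbove_card_isCode
  exact ⟨C, hC, hcard⟩

theorem AH_gilbert_varshamov_general (n r d : ℕ) (hdn : d ≤ n) (hdvd : r ∣ n) :
    Nat.factorial n ≤
      AH n r d * ((Nat.factorial r) ^ (n / r) * Nat.choose n (d - 1) * (n / r) ^ (d - 1)) := by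
  set R := regularFinset n r
  obtain ⟨C, hC, hcard⟩ := exists_isCode_card_eq_AH n r d
  have hcover : R ⊆ C.biUnion fun g => {f ∈ R | hammF n f g ≤ d - 1} := fun f hf => by
    obtain ⟨g, hg, hfg⟩ := hC.exists_hammF_le_of_card_eq_AH hcard (mem_regularFinset.1 hf)
    exact mem_biUnion.2 ⟨g, hg, mem_filter.2 ⟨hf, hfg⟩⟩
  have hR : #R ≤ AH n r d * (n.choose (d - 1) * (n / r) ^ (d - 1)) :=
    hcard ▸ (card_le_card hcover).trans (card_biUnion_le_card_mul _ _ _ fun g _ =>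
      card_filter_hammF_le_le (by omega) R (fun f hf => (mem_regularFinset.1 hf).1) g)
  calc n.factorial = #R * r.factorial ^ (n / r) :=
        (card_regularFinset_mul_factorial_pow hdvd).symm
    _ ≤ AH n r d * (n.choose (d - 1) * (n / r) ^ (d - 1)) * r.factorial ^ (n / r) := by gcongr
    _ = _ := by ring

/-- Gilbert–Varshamov bound in the Hamming metric:
`A_H(n,r,d) ≥ n! / ((r!)^{n/r} · C(n,d-1) · (n/r)^{d-1})`, stated in
cross-multiplied form. -/
theorem AH_gilbert_varshamov (n r d : ℕ) (hn : 0 < n) (hr : 0 < r) (hd : 0 < d)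
    (hdn : d ≤ n) (hdvd : r ∣ n) :
    Nat.factorial n ≤
      AH n r d * ((Nat.factorial r) ^ (n / r) * Nat.choose n (d - 1) * (n / r) ^ (d - 1)) :=
  AH_gilbert_varshamov_general n r d hdn hdvd
end

section
/- The size of a Hamming ball of radius u in the space of r-regular multipermutations of length n is at most C(n,u)·(n/r)^u. -/
/-!
A function in the ball differs from `m0` on at most `u` coordinates; enlarge that set of
coordinates to a `u`-set `S`. Then the function agrees with `m0` off `S` and takes values in
`[n/r]` on `S`, so the ball is covered by `C(n,u)` boxes of size `(n/r)^u`.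
-/

open Finset

section HammingBall

variable {ι β : Type*} [Fintype ι] [DecidableEq ι]

def piFinsetAgreeOutside (S : Finset ι) (s : Finset β) (g : ι → β) : Finset (ι → β) :=
  Fintype.piFinset fun j => if j ∈ S then s else {g j}

theorem card_piFinsetAgreeOutside (S : Finset ι) (s : Finset β) (g : ι → β) :
    #(piFinsetAgreeOutside S s g) = #s ^ #S := by
  simp [piFinsetAgreeOutside, apply_ite Finset.card, prod_ite_mem]

theorem mem_piFinsetAgreeOutside_of_hammingDist_le [DecidableEq β] {s : Finset β} {f g : ι → β}
    (hf : ∀ j, f j ∈ s) {u : ℕ} (hfg : hammingDist f g ≤ u) (hu : u ≤ Fintype.card ι) :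
    ∃ S : Finset ι, #S = u ∧ f ∈ piFinsetAgreeOutside S s g := by
  obtain ⟨S, hdiff, hS⟩ := exists_superset_card_eq hfg hu
  refine ⟨S, hS, Fintype.mem_piFinset.2 fun j => ?_⟩
  by_cases hj : j ∈ S
  · simpa [hj] using hf j
  · have hfj : f j = g j := by
      by_contra hne
      exact hj (hdiff (by simpa using hne))
    simp [hj, hfj]

theorem card_hammingBall_piFinset_le [DecidableEq β] (s : Finset β) (g : ι → β) {u : ℕ}
    (hu : u ≤ Fintype.card ι) :
    #{f ∈ Fintype.piFinset (fun _ : ι => s) | hammingDist f g ≤ u} ≤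
      (Fintype.card ι).choose u * #s ^ u := by
  have hcover : {f ∈ Fintype.piFinset (fun _ : ι => s) | hammingDist f g ≤ u} ⊆
      (powersetCard u univ).biUnion fun S => piFinsetAgreeOutside S s g := by
    intro f hf
    obtain ⟨hfs, hfg⟩ := mem_filter.1 hf
    obtain ⟨S, hS, hfS⟩ :=
      mem_piFinsetAgreeOutside_of_hammingDist_le (Fintype.mem_piFinset.1 hfs) hfg hu
    exact mem_biUnion.2 ⟨S, mem_powersetCard.2 ⟨subset_univ S, hS⟩, hfS⟩
  calc _ ≤ _ := card_le_card hcover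
    _ ≤ ∑ S ∈ powersetCard u univ, #(piFinsetAgreeOutside S s g) := card_biUnion_le
    _ = (Fintype.card ι).choose u * #s ^ u := by
      rw [sum_congr rfl fun S hS => by rw [card_piFinsetAgreeOutside, (mem_powersetCard.1 hS).2],
        sum_const, card_powersetCard, card_univ, smul_eq_mul]

end HammingBall

theorem multiperm_hamming_ball_bound_general (n r u : ℕ) (hu : u ≤ n) (m0 : Fin n → ℕ) :
    Nat.card {f : Fin n → ℕ // IsRegularM n r f ∧ hammF n f m0 ≤ u} ≤
      Nat.choose n u * (n / r) ^ u := by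
  have hball : {f | IsRegularM n r f ∧ hammF n f m0 ≤ u} ⊆
      ↑{f ∈ Fintype.piFinset (fun _ : Fin n => range (n / r)) | hammingDist f m0 ≤ u} := by
    -- `hammF n` is `hammingDist` unfolded
    rintro f ⟨hreg, hdist⟩
    simpa [Fintype.mem_piFinset] using ⟨hreg.1, hdist⟩
  calc Nat.card {f : Fin n → ℕ // IsRegularM n r f ∧ hammF n f m0 ≤ u}
      ≤ #{f ∈ Fintype.piFinset (fun _ : Fin n => range (n / r)) | hammingDist f m0 ≤ u} := by
        rw [← Set.ncard_coe_finset]; exact Set.ncard_le_ncard hball (finite_toSet _)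
    _ ≤ n.choose u * (n / r) ^ u := by
        simpa using card_hammingBall_piFinset_le (range (n / r)) m0 (u := u) (by simpa using hu)

/-- The size of a Hamming ball of radius `u` in the space of `r`-regular
multipermutations of length `n` is at most `C(n,u)·(n/r)^u`. -/
theorem multiperm_hamming_ball_bound (n r u : ℕ) (hn : 0 < n) (hr : 0 < r)
    (hdvd : r ∣ n) (hu : u ≤ n) (m0 : Fin n → ℕ) (hm0 : IsRegularM n r m0) :
    Nat.card {f : Fin n → ℕ // IsRegularM n r f ∧ hammF n f m0 ≤ u} ≤
      Nat.choose n u * (n / r) ^ u :=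
  multiperm_hamming_ball_bound_general n r u hu m0
end

section
/- Gilbert–Varshamov bound in the Ulam metric: A_∘(n,r,d) ≥ (n-d+1)! / (C(n,d-1) · (r!)^{2n/r}), for positive integers n, r, d with r | n. -/
/-- `AU n r d` : the maximum number of equivalence classes in an `r`-regular
multipermutation code of length `n` with minimum `r`-regular Ulam distance `d`
(codes are represented by sets of pairwise `≢_r` class representatives). -/
noncomputable def AU (n r d : ℕ) : ℕ :=
  sSup {M | ∃ C : Finset (Equiv.Perm (Fin n)), C.card = M ∧
    ∀ π ∈ C, ∀ σ ∈ C, π ≠ σ → mp n r π ≠ mp n r σ ∧ d ≤ ulamR n r π σ}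

/-!
A sphere-covering argument. A code of maximal size `AU n r d` cannot be extended, so every
permutation `τ` is within `r`-regular Ulam distance `d - 1` of a codeword `π`: some `π' ≡_r π`
and `σ' ≡_r τ` have `ulam π' σ' ≤ d - 1`. Hence `n! ≤ |C| · K · |B(d - 1)| · K`, where
`K = (r!)^(n/r)` bounds the size of an `≡_r`-class (the stabiliser of the block map
`x ↦ x / r`) and `|B(t)| ≤ C(n, t) · n!/(n - t)!` bounds an Ulam ball. Dividing by `n!/(n - d + 1)!` gives the bound.
-/

open Finset Equiv Nat
open scoped List

namespace List

variable {α : Type*}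

theorem Sublist.filter_mem_eq [DecidableEq α] {l B : List α} (hl : l <+ B) (hB : B.Nodup) :
    B.filter (· ∈ l) = l := by
  have hsub : l <+ B.filter (· ∈ l) := by
    simpa [filter_eq_self.2] using hl.filter (· ∈ l)
  refine (hsub.eq_of_length_le ?_).symm
  exact ((hB.filter _).subperm fun x hx => (mem_filter.1 hx).2 |> of_decide_eq_true).length_le

theorem eq_of_filter_eq_of_getElem_eq (p : α → Bool) {B₁ B₂ : List α}
    (hlen : B₁.length = B₂.length) (hfilter : B₁.filter p = B₂.filter p)
    (hget : ∀ (i : ℕ) (h₁ : i < B₁.length) (h₂ : i < B₂.length),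
      (p B₁[i] = false ∨ p B₂[i] = false) → B₁[i] = B₂[i]) :
    B₁ = B₂ := by
  induction B₁ generalizing B₂ with
  | nil => exact (length_eq_zero_iff.1 hlen.symm).symm
  | cons a t₁ ih =>
    cases B₂ with
    | nil => simp at hlen
    | cons b t₂ =>
      have hab : a = b := by
        by_cases h : p a = false ∨ p b = false
        · exact hget 0 (by simp) (by simp) h
        · simp only [not_or, Bool.not_eq_false] at h
          simpa [filter_cons, h.1, h.2] using congrArg head? hfilter
      subst hab
      refine congrArg _ (ih (by simpa using hlen) ?_ fun i h₁ h₂ => hget (i + 1) (by simpa)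
        (by simpa))
      cases hpa : p a <;> simpa [filter_cons, hpa] using hfilter

end List

theorem bddAbove_commonSublist_lengths {α : Type*} (A B : List α) :
    BddAbove {k | ∃ l : List α, l.length = k ∧ l <+ A ∧ l <+ B} :=
  ⟨A.length, by rintro _ ⟨l, rfl, hA, -⟩; exact hA.length_le⟩

theorem exists_sublist_length_eq_lcsLen {α : Type*} (A B : List α) :
    ∃ l : List α, l.length = lcsLen A B ∧ l <+ A ∧ l <+ B :=
  Nat.sSup_mem (s := {k | ∃ l : List α, l.length = k ∧ l <+ A ∧ l <+ B})
    ⟨0, [], rfl, List.nil_sublist _, List.nil_sublist _⟩ (bddAbove_commonSublist_lengths A B)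

theorem lcsLen_comm {α : Type*} (A B : List α) : lcsLen A B = lcsLen B A :=
  congrArg sSup (Set.ext fun _ => exists_congr fun _ => and_congr_right' and_comm)

theorem lcsLen_self {α : Type*} (A : List α) : lcsLen A A = A.length :=
  le_antisymm (csSup_le' (by rintro _ ⟨l, rfl, hA, -⟩; exact hA.length_le))
    (le_csSup (bddAbove_commonSublist_lengths A A) ⟨A, rfl, .refl A, .refl A⟩)

namespace MultipermCode

variable {n : ℕ}

theorem ulam_comm (π σ : Perm (Fin n)) : ulam n π σ = ulam n σ π := by
  rw [ulam, ulam, lcsLen_comm]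

theorem ulam_self (π : Perm (Fin n)) : ulam n π π = 0 := by
  simp [ulam, lcsLen_self]

theorem ulamR_comm (r : ℕ) (π σ : Perm (Fin n)) : ulamR n r π σ = ulamR n r σ π := by
  unfold ulamR
  congr 1
  ext k
  constructor <;> rintro ⟨π', σ', hπ', hσ', rfl⟩ <;> exact ⟨σ', π', hσ', hπ', ulam_comm _ _⟩

theorem exists_ulam_eq_ulamR (r : ℕ) (π σ : Perm (Fin n)) : ∃ π' σ' : Perm (Fin n),
    mp n r π' = mp n r π ∧ mp n r σ' = mp n r σ ∧ ulam n π' σ' = ulamR n r π σ := by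
  obtain ⟨π', σ', hπ', hσ', h⟩ := Nat.sInf_mem (s := {k | ∃ π' σ' : Perm (Fin n),
    mp n r π' = mp n r π ∧ mp n r σ' = mp n r σ ∧ k = ulam n π' σ'}) ⟨_, π, σ, rfl, rfl, rfl⟩
  exact ⟨π', σ', hπ', hσ', h.symm⟩

theorem ulamR_le_ulam {r : ℕ} {π σ π' σ' : Perm (Fin n)} (hπ : mp n r π' = mp n r π)
    (hσ : mp n r σ' = mp n r σ) : ulamR n r π σ ≤ ulam n π' σ' := by
  unfold ulamR
  exact Nat.sInf_le ⟨π', σ', hπ, hσ, rfl⟩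

theorem ulamR_eq_zero_of_mp_eq {r : ℕ} {π σ : Perm (Fin n)} (h : mp n r π = mp n r σ) :
    ulamR n r π σ = 0 :=
  Nat.eq_zero_of_le_zero <| (ulamR_le_ulam h.symm rfl).trans (ulam_self σ).le

def mpClass (n r : ℕ) (π : Perm (Fin n)) : Finset (Perm (Fin n)) := {π' | mp n r π' = mp n r π}

theorem card_mpClass_eq_card_stabilizer (r : ℕ) (π : Perm (Fin n)) :
    #(mpClass n r π) = Fintype.card {g : Perm (Fin n) // (fun x : Fin n => (x : ℕ) / r) ∘ g =
      fun x : Fin n => (x : ℕ) / r} := by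
  rw [mpClass, ← Fintype.card_subtype]
  refine Fintype.card_congr <| (Equiv.inv _).trans (Equiv.mulRight π) |>.subtypeEquiv fun π' => ?_
  exact Equiv.eq_comp_symm π (mp n r π') fun x => (x : ℕ) / r

theorem card_mpClass_le {r : ℕ} (hr : 0 < r) (hdvd : r ∣ n) (π : Perm (Fin n)) :
    #(mpClass n r π) ≤ r ! ^ (n / r) := by
  set f : Fin n → ℕ := fun x => (x : ℕ) / r
  have hfiber : ∀ i, Fintype.card {a // f a = i} ≤ r := fun i => by
    simpa using Fintype.card_le_of_injective
      (fun a : {a // f a = i} => (⟨a.1 % r, mod_lt _ hr⟩ : Fin r))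
      fun a b hab => Subtype.ext <| Fin.ext <| by
        rw [← div_add_mod a.1 r, ← div_add_mod b.1 r, Fin.mk.inj hab]
        exact congrArg (r * · + _) (a.2.trans b.2.symm)
  have himage : #(univ.image f) ≤ n / r := by
    simpa using card_le_card (t := range (n / r)) fun i hi => by
      obtain ⟨x, -, rfl⟩ := mem_image.1 hi
      exact mem_range.2 (Nat.div_lt_div_of_lt_of_dvd hdvd x.2)
  calc #(mpClass n r π) = ∏ i ∈ univ.image f, (Fintype.card {a // f a = i})! := by
        rw [card_mpClass_eq_card_stabilizer, DomMulAct.stabilizer_card']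
    _ ≤ r ! ^ #(univ.image f) :=
        prod_le_pow_card _ _ _ fun i _ => factorial_le (hfiber i)
    _ ≤ r ! ^ (n / r) := pow_le_pow_right₀ (factorial_pos r) himage

noncomputable def ulamBall (n t : ℕ) (π : Perm (Fin n)) : Finset (Perm (Fin n)) :=
  {τ | ulam n π τ ≤ t}

-- `τ` agrees with `π` off the `t` letters `S` missing from a common subsequence of length `n - t`,
-- so `τ` is determined by `S` and the positions `τ⁻¹ x` of the letters `x ∈ S`.
theorem exists_card_eq_filter_eq_of_ulam_le {π τ : Perm (Fin n)} {t : ℕ} (ht : t ≤ n)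
    (hτ : ulam n π τ ≤ t) : ∃ S : Finset (Fin n), #S = t ∧
      (List.ofFn π).filter (· ∉ S) = (List.ofFn τ).filter (· ∉ S) := by
  obtain ⟨l, hlen, hπ, hτ'⟩ := exists_sublist_length_eq_lcsLen (List.ofFn π) (List.ofFn τ)
  have hnodup : ∀ σ : Perm (Fin n), (List.ofFn σ).Nodup := fun σ => List.nodup_ofFn.2 σ.injective
  set l' := l.take (n - t)
  have hl'π : l' <+ List.ofFn π := (l.take_sublist _).trans hπ
  have hl'τ : l' <+ List.ofFn τ := (l.take_sublist _).trans hτ'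
  have hl'len : l'.length = n - t := by
    have : n - t ≤ l.length := by unfold ulam at hτ; omega
    simpa [l'] using this
  refine ⟨univ \ l'.toFinset, ?_, ?_⟩
  · rw [card_sdiff_of_subset (subset_univ _), Finset.card_univ, Fintype.card_fin,
      List.toFinset_card_of_nodup ((hnodup π).sublist hl'π), hl'len]
    omega
  · have hmem : ∀ x, (decide (x ∉ univ \ l'.toFinset)) = decide (x ∈ l') := by simp
    simp only [hmem, hl'π.filter_mem_eq (hnodup π), hl'τ.filter_mem_eq (hnodup τ)]

theorem eq_of_filter_eq_of_symm_eq {τ₁ τ₂ : Perm (Fin n)} (S : Finset (Fin n))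
    (hfilter : (List.ofFn τ₁).filter (· ∉ S) = (List.ofFn τ₂).filter (· ∉ S))
    (hS : ∀ x ∈ S, τ₁.symm x = τ₂.symm x) : τ₁ = τ₂ := by
  refine Equiv.coe_fn_injective <| List.ofFn_injective <|
    List.eq_of_filter_eq_of_getElem_eq _ (by simp) hfilter fun i h₁ h₂ hi => ?_
  simp only [List.getElem_ofFn, decide_eq_false_iff_not, not_not] at hi ⊢
  rcases hi with hi | hi
  · exact (symm_apply_eq _).1 ((hS _ hi).symm.trans (symm_apply_apply _ _))
  · exact ((symm_apply_eq _).1 ((hS _ hi).trans (symm_apply_apply _ _))).symm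

theorem card_ulamBall_le {t : ℕ} (ht : t ≤ n) (π : Perm (Fin n)) :
    #(ulamBall n t π) ≤ n.choose t * n.descFactorial t := by
  choose! S hS using fun τ (hτ : τ ∈ ulamBall n t π) =>
    exists_card_eq_filter_eq_of_ulam_le ht (mem_filter.1 hτ).2
  have hfiber : ∀ U ∈ univ.powersetCard t,
      #{τ ∈ ulamBall n t π | S τ = U} ≤ n.descFactorial t := by
    intro U hU
    calc #{τ ∈ ulamBall n t π | S τ = U}
        ≤ #(univ : Finset (U ↪ Fin n)) := by
          refine card_le_card_of_injOn
            (fun τ => (Function.Embedding.subtype (· ∈ U)).trans τ.symm.toEmbedding)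
            (fun _ _ => mem_coe.2 (mem_univ _)) fun τ₁ h₁ τ₂ h₂ heq => ?_
          obtain ⟨hτ₁, rfl⟩ := mem_filter.1 (mem_coe.1 h₁)
          obtain ⟨hτ₂, h₂U⟩ := mem_filter.1 (mem_coe.1 h₂)
          refine eq_of_filter_eq_of_symm_eq (S τ₁) ?_ fun x hx => DFunLike.congr_fun heq ⟨x, hx⟩
          rw [← (hS τ₁ hτ₁).2, ← h₂U, (hS τ₂ hτ₂).2]
      _ = n.descFactorial t := by
          rw [Finset.card_univ, Fintype.card_embedding_eq, Fintype.card_fin, Fintype.card_coe,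
            (mem_powersetCard_univ.1 hU)]
  calc #(ulamBall n t π)
        ≤ n.descFactorial t * #(univ.powersetCard t : Finset (Finset (Fin n))) :=
          card_le_mul_card_image_of_maps_to
            (fun τ hτ => mem_powersetCard_univ.2 (hS τ hτ).1) _ hfiber
    _ = n.choose t * n.descFactorial t := by
        rw [card_powersetCard, Finset.card_univ, Fintype.card_fin, mul_comm]

def IsCode (n r d : ℕ) (C : Finset (Perm (Fin n))) : Prop :=
  ∀ π ∈ C, ∀ σ ∈ C, π ≠ σ → mp n r π ≠ mp n r σ ∧ d ≤ ulamR n r π σ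

theorem bddAbove_code_sizes (n r d : ℕ) :
    BddAbove {M | ∃ C : Finset (Perm (Fin n)), #C = M ∧ IsCode n r d C} :=
  ⟨_, by rintro _ ⟨C, rfl, -⟩; exact card_le_univ C⟩

theorem IsCode.card_le_AU {r d : ℕ} {C : Finset (Perm (Fin n))} (hC : IsCode n r d C) :
    #C ≤ AU n r d :=
  le_csSup (bddAbove_code_sizes n r d) ⟨C, rfl, hC⟩

theorem exists_isCode_card_eq_AU (n r d : ℕ) :
    ∃ C : Finset (Perm (Fin n)), IsCode n r d C ∧ #C = AU n r d := by
  obtain ⟨C, hcard, hC⟩ := Nat.sSup_mem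
    (s := {M | ∃ C : Finset (Perm (Fin n)), #C = M ∧ IsCode n r d C})
    ⟨0, ∅, rfl, by simp [IsCode]⟩ (bddAbove_code_sizes n r d)
  exact ⟨C, hC, hcard⟩

theorem IsCode.insert {r d : ℕ} {C : Finset (Perm (Fin n))} {τ : Perm (Fin n)}
    (hC : IsCode n r d C) (hd : 0 < d) (hfar : ∀ π ∈ C, d ≤ ulamR n r π τ) :
    IsCode n r d (insert τ C) := by
  have hsep : ∀ π ∈ C, mp n r π ≠ mp n r τ ∧ d ≤ ulamR n r π τ := fun π hπ =>
    ⟨fun h => (hfar π hπ).not_gt (by rw [ulamR_eq_zero_of_mp_eq h]; exact hd), hfar π hπ⟩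
  intro π hπ σ hσ hne
  rcases mem_insert.1 hπ with rfl | hπC <;> rcases mem_insert.1 hσ with rfl | hσC
  · exact absurd rfl hne
  · exact ⟨(hsep σ hσC).1.symm, ulamR_comm r σ π ▸ (hsep σ hσC).2⟩
  · exact hsep π hπC
  · exact hC π hπC σ hσC hne

theorem IsCode.exists_ulamR_lt_of_card_eq_AU {r d : ℕ} {C : Finset (Perm (Fin n))}
    (hC : IsCode n r d C) (hcard : #C = AU n r d) (hd : 0 < d) (τ : Perm (Fin n)) :
    ∃ π ∈ C, ulamR n r π τ < d := by
  by_contra! hfar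
  have hτ : τ ∉ C := fun hτ => (hfar τ hτ).not_gt (by rw [ulamR_eq_zero_of_mp_eq rfl]; exact hd)
  have := (hC.insert hd hfar).card_le_AU
  rw [card_insert_of_notMem hτ] at this
  omega

theorem factorial_le_of_forall_exists_ulamR_le {r t : ℕ} (hr : 0 < r) (hdvd : r ∣ n)
    (ht : t ≤ n) (C : Finset (Perm (Fin n))) (hcover : ∀ τ, ∃ π ∈ C, ulamR n r π τ ≤ t) :
    n ! ≤ #C * (r ! ^ (n / r) * (n.choose t * n.descFactorial t * r ! ^ (n / r))) := by
  have hsub : (univ : Finset (Perm (Fin n))) ⊆ C.biUnion fun π =>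
      (mpClass n r π).biUnion fun π' => (ulamBall n t π').biUnion (mpClass n r) := by
    intro τ _
    obtain ⟨π, hπ, hle⟩ := hcover τ
    obtain ⟨π', σ', hπ', hσ', hulam⟩ := exists_ulam_eq_ulamR r π τ
    simp only [mem_biUnion, mpClass, ulamBall, mem_filter, mem_univ, true_and]
    exact ⟨π, hπ, π', hπ', σ', hulam ▸ hle, hσ'.symm⟩
  calc n ! = #(univ : Finset (Perm (Fin n))) := by simp [Fintype.card_perm]
    _ ≤ _ := card_le_card hsub
    _ ≤ _ := card_biUnion_le_card_mul _ _ _ fun π _ =>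
      (card_biUnion_le_card_mul _ _ _ fun π' _ =>
        (card_biUnion_le_card_mul _ _ _ fun σ _ => card_mpClass_le hr hdvd σ).trans
          (Nat.mul_le_mul_right _ (card_ulamBall_le ht π'))).trans
      (Nat.mul_le_mul_right _ (card_mpClass_le hr hdvd π))

end MultipermCode

open MultipermCode

theorem AU_gilbert_varshamov_general (n r d : ℕ) (hr : 0 < r) (hd : 0 < d)
    (hdn : d ≤ n) (hdvd : r ∣ n) :
    Nat.factorial (n - d + 1) ≤
      AU n r d * (Nat.choose n (d - 1) * (Nat.factorial r) ^ (2 * (n / r))) := by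
  obtain ⟨C, hC, hcard⟩ := exists_isCode_card_eq_AU n r d
  have hcount := factorial_le_of_forall_exists_ulamR_le hr hdvd (t := d - 1) (by omega) C
    fun τ => (hC.exists_ulamR_lt_of_card_eq_AU hcard hd τ).imp fun _ ⟨hπ, hlt⟩ => ⟨hπ, by omega⟩
  have hfact : (n - d + 1)! * n.descFactorial (d - 1) = n ! := by
    rw [← factorial_mul_descFactorial (show d - 1 ≤ n by omega),
      show n - (d - 1) = n - d + 1 by omega]
  refine Nat.le_of_mul_le_mul_right ?_ (descFactorial_pos.2 (show d - 1 ≤ n by omega))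
  calc (n - d + 1)! * n.descFactorial (d - 1) = n ! := hfact
    _ ≤ _ := hcount
    _ = _ := by rw [hcard, two_mul, pow_add]; ring

/-- Gilbert–Varshamov bound in the Ulam metric:
`A_∘(n,r,d) ≥ (n-d+1)! / (C(n,d-1) · (r!)^{2n/r})`, stated in cross-multiplied form. -/
theorem AU_gilbert_varshamov (n r d : ℕ) (hn : 0 < n) (hr : 0 < r) (hd : 0 < d)
    (hdn : d ≤ n) (hdvd : r ∣ n) :
    Nat.factorial (n - d + 1) ≤
      AU n r d * (Nat.choose n (d - 1) * (Nat.factorial r) ^ (2 * (n / r))) :=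
  AU_gilbert_varshamov_general n r d hr hd hdn hdvd
end

section
/- The rows of a semi-Latin square with parameters n and r, viewed as ordered set partitions of [n], satisfy the property that any two parts occupying the same column position of distinct rows are disjoint; consequently they form an r-regular multipermutation code of length n with minimum r-regular Ulam distance at least r, of cardinality n/r. -/
/-- The multipermutation code obtained from the rows of a semi-Latin square `L`:
a permutation is a codeword iff its ordered set partition is some row of `L`. -/
def slsCode (n r : ℕ) (L : Fin (n / r) → Fin (n / r) → Finset (Fin n)) :
    Set (Equiv.Perm (Fin n)) :=
  {π | ∃ i : Fin (n / r), ∀ j : Fin (n / r), part n r π (j : ℕ) = L i j}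

lemma pairwise_disjoint_of_existsUnique_mem {ι α : Type*} {s : ι → Finset α}
    (h : ∀ x, ∃! i, x ∈ s i) : Pairwise (Function.onFun Disjoint s) := by
  intro i i' hne
  refine Finset.disjoint_left.2 fun x hi hi' => hne ?_
  exact (h x).unique hi hi'

lemma List.exists_getElem?_eq_of_cons_sublist {α : Type*} {x : α} {t l : List α}
    (h : (x :: t).Sublist l) : ∃ k, k + t.length < l.length ∧ l[k]? = some x := by
  obtain ⟨l₁, l₂, rfl, hx, ht⟩ := List.cons_sublist_iff.1 h
  obtain ⟨a, b, rfl⟩ := List.append_of_mem hx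
  refine ⟨a.length, ?_, ?_⟩
  · have := ht.length_le
    simp only [List.length_append, List.length_cons]
    omega
  · simp

section Multipermutation

variable {n r : ℕ}

@[simp]
lemma mem_part_iff {π : Equiv.Perm (Fin n)} {i : ℕ} {x : Fin n} :
    x ∈ part n r π i ↔ mp n r π x = i := by
  simp [part]

lemma mp_lt_div (hdvd : r ∣ n) (π : Equiv.Perm (Fin n)) (x : Fin n) : mp n r π x < n / r :=
  Nat.div_lt_div_of_lt_of_dvd hdvd (π.symm x).isLt

lemma mp_eq_iff_part_eq (hdvd : r ∣ n) {π σ : Equiv.Perm (Fin n)} :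
    mp n r π = mp n r σ ↔ ∀ j : Fin (n / r), part n r π j = part n r σ j := by
  refine ⟨fun h j => by simp [part, h], fun h => funext fun x => ?_⟩
  have hx : x ∈ part n r π (mp n r π x) := mem_part_iff.2 rfl
  rw [show mp n r π x = (⟨mp n r π x, mp_lt_div hdvd π x⟩ : Fin (n / r)) from rfl, h] at hx
  exact (mem_part_iff.1 hx).symm

lemma mp_ne_of_disjoint_part (hdvd : r ∣ n) {π σ : Equiv.Perm (Fin n)}
    (h : ∀ j : Fin (n / r), Disjoint (part n r π j) (part n r σ j)) (x : Fin n) :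
    mp n r π x ≠ mp n r σ x := fun hx =>
  Finset.disjoint_left.1 (h ⟨mp n r π x, mp_lt_div hdvd π x⟩) (mem_part_iff.2 rfl)
    (mem_part_iff.2 hx.symm)

lemma exists_part_eq (hdvd : r ∣ n) (P : Fin (n / r) → Finset (Fin n))
    (hcard : ∀ j, (P j).card = r) (hP : ∀ x, ∃! j, x ∈ P j) :
    ∃ π : Equiv.Perm (Fin n), ∀ j : Fin (n / r), part n r π j = P j := by
  choose blk hblk huniq using hP
  have hmem : ∀ x j, x ∈ P j ↔ blk x = j :=
    fun x j => ⟨fun h => (huniq x j h).symm, fun h => h ▸ hblk x⟩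
  have hfiber : ∀ j, Fintype.card {x // blk x = j} = r := fun j => by
    rw [Fintype.card_subtype]
    exact (congrArg Finset.card (Finset.ext fun x => by simp [hmem])).trans (hcard j)
  -- `τ` sends the cell `P j` onto the positions `j * r, …, j * r + r - 1`.
  let τ : Fin n ≃ Fin n := (Equiv.sigmaFiberEquiv blk).symm.trans
    ((Equiv.sigmaCongrRight fun j => Fintype.equivFinOfCardEq (hfiber j)).trans
      ((Equiv.sigmaEquivProd _ _).trans
        (finProdFinEquiv.trans (finCongr (Nat.div_mul_cancel hdvd)))))
  have hdiv : ∀ (j : Fin (n / r)) (k : Fin r), (finProdFinEquiv (j, k) : ℕ) / r = j :=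
    fun j k => by
      rw [finProdFinEquiv_apply_val, Nat.add_mul_div_left _ _ k.pos, Nat.div_eq_of_lt k.isLt,
        zero_add]
  have hτ : ∀ x, mp n r τ.symm x = blk x := fun x => hdiv (blk x) _
  refine ⟨τ.symm, fun j => Finset.ext fun x => ?_⟩
  rw [mem_part_iff, hτ, hmem, Fin.val_inj]

lemma mp_eq_zero_of_cons_sublist {π : Equiv.Perm (Fin n)} {x : Fin n} {t : List (Fin n)}
    (h : (x :: t).Sublist (List.ofFn π)) (hlen : n < t.length + 1 + r) : mp n r π x = 0 := by
  obtain ⟨k, hk, hkx⟩ := List.exists_getElem?_eq_of_cons_sublist h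
  rw [List.length_ofFn] at hk
  obtain ⟨hkn, hπk⟩ : ∃ hkn : k < n, π ⟨k, hkn⟩ = x := by simpa using hkx
  rw [mp, ← hπk, Equiv.symm_apply_apply]
  exact Nat.div_eq_of_lt (show k < r by omega)

lemma lcsLen_ofFn_le_sub {π σ : Equiv.Perm (Fin n)} (h : ∀ x, mp n r π x ≠ mp n r σ x) :
    lcsLen (List.ofFn π) (List.ofFn σ) ≤ n - r := by
  refine csSup_le ⟨0, [], rfl, List.nil_sublist _, List.nil_sublist _⟩ ?_
  rintro _ ⟨_ | ⟨x, t⟩, rfl, hπ, hσ⟩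
  · exact Nat.zero_le _
  · by_contra! hlong
    rw [List.length_cons] at hlong
    exact h x ((mp_eq_zero_of_cons_sublist hπ (by omega)).trans
      (mp_eq_zero_of_cons_sublist hσ (by omega)).symm)

lemma le_ulam_of_forall_mp_ne (hrn : r ≤ n) {π σ : Equiv.Perm (Fin n)}
    (h : ∀ x, mp n r π x ≠ mp n r σ x) : r ≤ ulam n π σ := by
  have := lcsLen_ofFn_le_sub h
  unfold ulam
  omega

lemma le_ulamR_of_forall_mp_ne (hrn : r ≤ n) {π σ : Equiv.Perm (Fin n)}
    (h : ∀ x, mp n r π x ≠ mp n r σ x) : r ≤ ulamR n r π σ := by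
  refine le_csInf ⟨_, π, σ, rfl, rfl, rfl⟩ ?_
  rintro _ ⟨π', σ', hπ', hσ', rfl⟩
  exact le_ulam_of_forall_mp_ne hrn (by rwa [hπ', hσ'])

end Multipermutation

section SemiLatinSquare

variable {n r : ℕ} {L : Fin (n / r) → Fin (n / r) → Finset (Fin n)}

lemma mp_eq_mp_iff_row_eq (hdvd : r ∣ n) (hcell : ∀ i j, (L i j).card = r)
    (hcol : ∀ j : Fin (n / r), ∀ x : Fin n, ∃! i, x ∈ L i j)
    {π σ : Equiv.Perm (Fin n)} {i i' : Fin (n / r)}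
    (hπ : ∀ j : Fin (n / r), part n r π j = L i j)
    (hσ : ∀ j : Fin (n / r), part n r σ j = L i' j) :
    mp n r π = mp n r σ ↔ i = i' := by
  simp only [mp_eq_iff_part_eq hdvd, hπ, hσ]
  refine ⟨fun h => ?_, fun h _ => h ▸ rfl⟩
  obtain ⟨x, hx⟩ : (L i i).Nonempty := by
    rw [← Finset.card_pos, hcell]
    exact (Nat.div_pos_iff.1 i.pos).1
  exact (hcol i x).unique hx (h i ▸ hx)

end SemiLatinSquare

theorem semiLatin_code_general (n r : ℕ) (hdvd : r ∣ n)
    (L : Fin (n / r) → Fin (n / r) → Finset (Fin n))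
    (hcell : ∀ i j, (L i j).card = r)
    (hrow : ∀ i : Fin (n / r), ∀ x : Fin n, ∃! j, x ∈ L i j)
    (hcol : ∀ j : Fin (n / r), ∀ x : Fin n, ∃! i, x ∈ L i j) :
    (∀ i i' j : Fin (n / r), i ≠ i' → Disjoint (L i j) (L i' j)) ∧
    (∀ π ∈ slsCode n r L, ∀ σ ∈ slsCode n r L,
      mp n r π ≠ mp n r σ → r ≤ ulamR n r π σ) ∧
    Nat.card {f : Fin n → ℕ // ∃ π ∈ slsCode n r L, mp n r π = f} = n / r := by
  have hdisj : ∀ i i' j : Fin (n / r), i ≠ i' → Disjoint (L i j) (L i' j) :=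
    fun _ _ j hne => pairwise_disjoint_of_existsUnique_mem (hcol j) hne
  refine ⟨hdisj, ?_, ?_⟩
  · rintro π ⟨i, hπ⟩ σ ⟨i', hσ⟩ hne
    have hii : i ≠ i' := mt (mp_eq_mp_iff_row_eq hdvd hcell hcol hπ hσ).2 hne
    refine le_ulamR_of_forall_mp_ne (Nat.div_pos_iff.1 i.pos).2 (mp_ne_of_disjoint_part hdvd ?_)
    simpa only [hπ, hσ] using fun j => hdisj i i' j hii
  · choose row hrowL using fun i => exists_part_eq hdvd (L i) (hcell i) (hrow i)
    let g : Fin (n / r) → {f : Fin n → ℕ // ∃ π ∈ slsCode n r L, mp n r π = f} :=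
      fun i => ⟨mp n r (row i), row i, ⟨i, hrowL i⟩, rfl⟩
    have hg : Function.Bijective g := by
      refine ⟨fun i i' h => ?_, ?_⟩
      · exact (mp_eq_mp_iff_row_eq hdvd hcell hcol (hrowL i) (hrowL i')).1 (congrArg (·.1) h)
      · rintro ⟨_, π, ⟨i, hπ⟩, rfl⟩
        exact ⟨i, Subtype.ext ((mp_eq_mp_iff_row_eq hdvd hcell hcol (hrowL i) hπ).2 rfl)⟩
    rw [← Nat.card_eq_of_bijective g hg, Nat.card_eq_fintype_card, Fintype.card_fin]

/-- The rows of a semi-Latin square with parameters `n` and `r`, viewed as ordered set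
partitions of `[n]`, have pairwise disjoint parts in the same column position of
distinct rows; consequently they form an `r`-regular multipermutation code of length
`n` with minimum `r`-regular Ulam distance at least `r` and cardinality `n/r`. -/
theorem semiLatin_code (n r : ℕ) (hn : 0 < n) (hr : 0 < r) (hdvd : r ∣ n)
    (L : Fin (n / r) → Fin (n / r) → Finset (Fin n))
    (hcell : ∀ i j, (L i j).card = r)
    (hrow : ∀ i : Fin (n / r), ∀ x : Fin n, ∃! j, x ∈ L i j)
    (hcol : ∀ j : Fin (n / r), ∀ x : Fin n, ∃! i, x ∈ L i j) :
    (∀ i i' j : Fin (n / r), i ≠ i' → Disjoint (L i j) (L i' j)) ∧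
    (∀ π ∈ slsCode n r L, ∀ σ ∈ slsCode n r L,
      mp n r π ≠ mp n r σ → r ≤ ulamR n r π σ) ∧
    Nat.card {f : Fin n → ℕ // ∃ π ∈ slsCode n r L, mp n r π = f} = n / r :=
  semiLatin_code_general n r hdvd L hcell hrow hcol
end
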